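/- (One-step mean-field LQ: optimal terminal-stage control) Consider the terminal stage of the mean-field problem: minimize over deterministic-feedback-admissible $u \in L^2(\Omega, \mathfrak{F}_N, \mathbb{R}^r)$ the quantity $\mathbf{E}[u^{\intercal} R u] + \mathbf{E}[x^{+\intercal} Q x^+] + (\mathbf{E}x^+)^{\intercal} \overline{Q}\, \mathbf{E}x^+$ where $x^+ = A x + \overline{A}\,\mathbf{E}x + B u + (C x + \overline{C}\,\mathbf{E}x + D u) w$, $x \in L^2(\Omega, \mathfrak{F}_N, \mathbb{R}^n)$ is given, and $w$ is independent of $\mathfrak{F}_N$ with $\mathbf{E}w = 0$, $\mathbf{E}w^2 = 1$. Assume $Q \geq 0$, $Q + \overline{Q} \geq 0$, $R > 0$. Then the unique minimizer is characterized by the pair of equations: $(R + B^{\intercal}QB + D^{\intercal}QD)(u - \mathbf{E}u) = -(B^{\intercal}QA + D^{\intercal}QC)(x - \mathbf{E}x)$ and $(R + B^{\intercal}(Q+\overline{Q})B + D^{\intercal}QD)\,\mathbf{E}u = -\big(B^{\intercal}(Q+\overline{Q})(A+\overline{A}) + D^{\intercal}Q(C+\overline{C})\big)\,\mathbf{E}x$.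 -/

import Mathlib

/-!
With `x̃ = x - 𝔼x` and `ṽ = v - 𝔼v`, the next state is `p + w q` with `p, q` measurable for the
current σ-algebra; independence of `w` kills the terms linear in `w` and replaces `w²` by
`𝔼w² = 1`, and splitting each quadratic term into fluctuation and mean turns the cost of `v` into
`𝔼 ℓ(x̃, ṽ) + ℓ̄(𝔼x, 𝔼v)`, where `ℓ` and `ℓ̄` are one-stage LQ costs (`ℓ̄` with `Q + Q̄`, `A + Ā`,
`C + C̄` in place of `Q`, `A`, `C`).

Completing the square in the control, if `u` satisfies both equations then
`cost v - cost u = 𝔼[(ṽ - ũ)ᵀ S (ṽ - ũ)] + (𝔼v - 𝔼u)ᵀ S̄ (𝔼v - 𝔼u)` with `S`, `S̄` the positive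
definite matrices of the equations, so `u` is optimal. The feedback
`u₀ = -S⁻¹ K x̃ - S̄⁻¹ K̄ 𝔼x` solves the equations, so an optimal `u` has `cost u = cost u₀`; both
squares then vanish, `u` has the fluctuation and mean of `u₀`, and hence satisfies the equations.
-/

open Matrix MeasureTheory ProbabilityTheory

namespace Matrix

variable {𝕜 ι κ ν : Type*} [CommRing 𝕜] [Fintype ι] [Fintype κ] [Fintype ν]

lemma IsSymm.dotProduct_mulVec_comm {M : Matrix κ κ 𝕜} (hM : M.IsSymm) (x y : κ → 𝕜) :
    x ⬝ᵥ M *ᵥ y = y ⬝ᵥ M *ᵥ x := by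
  rw [dotProduct_mulVec, dotProduct_comm, ← mulVec_transpose, hM.eq]

lemma dotProduct_transpose_mul_mul_mulVec (N : Matrix κ ι 𝕜) (P : Matrix κ κ 𝕜)
    (M : Matrix κ ν 𝕜) (y : ι → 𝕜) (z : ν → 𝕜) :
    y ⬝ᵥ (Nᵀ * P * M) *ᵥ z = (N *ᵥ y) ⬝ᵥ P *ᵥ (M *ᵥ z) := by
  rw [← mulVec_mulVec, ← mulVec_mulVec, dotProduct_mulVec, vecMul_transpose]

lemma PosDef.eq_zero_of_dotProduct_mulVec_self_eq_zero {M : Matrix ι ι ℝ} (hM : M.PosDef)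
    {x : ι → ℝ} (h : x ⬝ᵥ M *ᵥ x = 0) : x = 0 := by
  by_contra hx
  simpa [h] using hM.dotProduct_mulVec_pos hx

lemma PosSemidef.dotProduct_mulVec_self_nonneg {M : Matrix ι ι ℝ} (hM : M.PosSemidef)
    (x : ι → ℝ) : 0 ≤ x ⬝ᵥ M *ᵥ x := by
  simpa using hM.dotProduct_mulVec_nonneg x

lemma mulVec_neg_nonsing_inv_mul_mulVec [DecidableEq ι] {M : Matrix ι ι ℝ} (hM : IsUnit M)
    (N : Matrix ι ν ℝ) (y : ν → ℝ) : M *ᵥ (-(M⁻¹ * N) *ᵥ y) = -(N *ᵥ y) := by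
  rw [mulVec_mulVec, Matrix.mul_neg,
    mul_nonsing_inv_cancel_left M N ((isUnit_iff_isUnit_det M).1 hM), neg_mulVec]

end Matrix

section LQAlgebra

variable {𝕜 ι κ ν : Type*} [CommRing 𝕜] [Fintype ι] [Fintype κ] [Fintype ν]
  (R : Matrix ι ι 𝕜) (Q₁ Q₂ : Matrix κ κ 𝕜)
  (A : Matrix κ ν 𝕜) (B : Matrix κ ι 𝕜) (C : Matrix κ ν 𝕜) (D : Matrix κ ι 𝕜)

def lqCost (a : ν → 𝕜) (b : ι → 𝕜) : 𝕜 :=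
  b ⬝ᵥ R *ᵥ b + (A *ᵥ a + B *ᵥ b) ⬝ᵥ Q₁ *ᵥ (A *ᵥ a + B *ᵥ b)
    + (C *ᵥ a + D *ᵥ b) ⬝ᵥ Q₂ *ᵥ (C *ᵥ a + D *ᵥ b)

def lqHessian : Matrix ι ι 𝕜 := R + Bᵀ * Q₁ * B + Dᵀ * Q₂ * D

def lqCross : Matrix ι ν 𝕜 := Bᵀ * Q₁ * A + Dᵀ * Q₂ * C

variable {R Q₁ Q₂}

lemma lqCost_sub_lqCost (hR : R.IsSymm) (hQ₁ : Q₁.IsSymm) (hQ₂ : Q₂.IsSymm)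
    (a : ν → 𝕜) (b b' : ι → 𝕜) :
    lqCost R Q₁ Q₂ A B C D a b - lqCost R Q₁ Q₂ A B C D a b'
      = (b - b') ⬝ᵥ lqHessian R Q₁ Q₂ B D *ᵥ (b - b')
        + 2 * ((b - b') ⬝ᵥ (lqHessian R Q₁ Q₂ B D *ᵥ b' + lqCross Q₁ Q₂ A B C D *ᵥ a)) := by
  simp only [lqCost, lqHessian, lqCross, add_mulVec, dotProduct_add, add_dotProduct,
    dotProduct_transpose_mul_mul_mulVec, mulVec_add, mulVec_sub, sub_dotProduct, dotProduct_sub,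
    hR.dotProduct_mulVec_comm, hQ₁.dotProduct_mulVec_comm, hQ₂.dotProduct_mulVec_comm]
  ring

lemma lqCost_sub_lqCost_of_stationary (hR : R.IsSymm) (hQ₁ : Q₁.IsSymm) (hQ₂ : Q₂.IsSymm)
    {a : ν → 𝕜} {b' : ι → 𝕜}
    (h : lqHessian R Q₁ Q₂ B D *ᵥ b' = -(lqCross Q₁ Q₂ A B C D *ᵥ a)) (b : ι → 𝕜) :
    lqCost R Q₁ Q₂ A B C D a b - lqCost R Q₁ Q₂ A B C D a b'
      = (b - b') ⬝ᵥ lqHessian R Q₁ Q₂ B D *ᵥ (b - b') := by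
  rw [lqCost_sub_lqCost A B C D hR hQ₁ hQ₂, h, neg_add_cancel, dotProduct_zero, mul_zero,
    add_zero]

end LQAlgebra

lemma lqHessian_posDef {ι κ : Type*} [Fintype ι] [Fintype κ] {R : Matrix ι ι ℝ}
    {Q₁ Q₂ : Matrix κ κ ℝ} (hR : R.PosDef)
    (hQ₁ : Q₁.PosSemidef) (hQ₂ : Q₂.PosSemidef) (B D : Matrix κ ι ℝ) :
    (lqHessian R Q₁ Q₂ B D).PosDef :=
  (hR.add_posSemidef (by simpa using hQ₁.conjTranspose_mul_mul_same B)).add_posSemidef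
    (by simpa using hQ₂.conjTranspose_mul_mul_same D)

namespace MeasureTheory

variable {Ω ι ι' κ : Type*} [Fintype ι] [Fintype ι'] [Fintype κ] {m0 : MeasurableSpace Ω}
  {μ : Measure Ω}

lemma MemLp.mulVec (M : Matrix κ ι ℝ) {f : Ω → ι → ℝ} {p : ENNReal} (hf : MemLp f p μ) :
    MemLp (fun ω => M *ᵥ f ω) p μ :=
  M.mulVecLin.toContinuousLinearMap.comp_memLp' hf

lemma Integrable.mulVec (M : Matrix κ ι ℝ) {f : Ω → ι → ℝ} (hf : Integrable f μ) :
    Integrable (fun ω => M *ᵥ f ω) μ :=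
  M.mulVecLin.toContinuousLinearMap.integrable_comp hf

lemma MemLp.integrable_dotProduct {f g : Ω → ι → ℝ} (hf : MemLp f 2 μ) (hg : MemLp g 2 μ) :
    Integrable (fun ω => f ω ⬝ᵥ g ω) μ :=
  integrable_finsetSum _ fun i _ => (hf.eval i).integrable_mul (hg.eval i)

lemma integral_mulVec (M : Matrix κ ι ℝ) {f : Ω → ι → ℝ} (hf : Integrable f μ) :
    ∫ ω, M *ᵥ f ω ∂μ = M *ᵥ μ[f] :=
  M.mulVecLin.toContinuousLinearMap.integral_comp_comm hf

lemma integral_dotProduct_const {f : Ω → ι → ℝ} (hf : Integrable f μ) (c : ι → ℝ) :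
    ∫ ω, f ω ⬝ᵥ c ∂μ = μ[f] ⬝ᵥ c := by
  simp only [dotProduct]
  rw [integral_finsetSum _ fun i _ => (hf.eval i).mul_const _]
  simp only [integral_mul_const, eval_integral hf.eval]

lemma _root_.ProbabilityTheory.Indep.indepFun_of_measurable {γ β : Type*} [MeasurableSpace γ]
    [MeasurableSpace β] {m : MeasurableSpace Ω} {w : Ω → γ}
    (h : Indep (MeasurableSpace.comap w inferInstance) m μ)
    {g : Ω → β} (hg : Measurable[m] g) : IndepFun w g μ :=
  (IndepFun_iff_Indep _ _ _).2 (indep_of_indep_of_le_right h hg.comap_le)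

lemma integral_add_smul_of_indep {m : MeasurableSpace Ω} {w : Ω → ℝ}
    (hwindep : Indep (MeasurableSpace.comap w inferInstance) m μ) (hw : Integrable w μ)
    (hwmean : μ[w] = 0)
    {p q : Ω → ι → ℝ} (hp : Integrable p μ) (hq : Measurable[m] q) (hqi : Integrable q μ) :
    ∫ ω, (p ω + w ω • q ω) ∂μ = μ[p] := by
  have hind := hwindep.indepFun_of_measurable hq
  rw [integral_add hp (hind.integrable_smul hw hqi),
    hind.integral_fun_smul_eq_smul_integral hw.aestronglyMeasurable hqi.aestronglyMeasurable,
    hwmean, zero_smul, add_zero]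

variable [IsProbabilityMeasure μ]

lemma integral_mulVec_add_const_add_mulVec (A : Matrix κ ι ℝ) (c : κ → ℝ) (B : Matrix κ ι' ℝ)
    {x : Ω → ι → ℝ} {v : Ω → ι' → ℝ} (hx : Integrable x μ) (hv : Integrable v μ) :
    ∫ ω, (A *ᵥ x ω + c + B *ᵥ v ω) ∂μ = A *ᵥ μ[x] + c + B *ᵥ μ[v] := by
  rw [integral_add ((hx.mulVec A).fun_add (integrable_const c)) (hv.mulVec B),
    integral_add (hx.mulVec A) (integrable_const c), integral_mulVec A hx, integral_mulVec B hv,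
    integral_const, probReal_univ, one_smul]

lemma sub_integral_mulVec_add_const_add_mulVec (A : Matrix κ ι ℝ) (c : κ → ℝ)
    (B : Matrix κ ι' ℝ) {x : Ω → ι → ℝ} {v : Ω → ι' → ℝ} (hx : Integrable x μ)
    (hv : Integrable v μ) (ω : Ω) :
    A *ᵥ x ω + c + B *ᵥ v ω - ∫ ω', (A *ᵥ x ω' + c + B *ᵥ v ω') ∂μ
      = A *ᵥ (x ω - μ[x]) + B *ᵥ (v ω - μ[v]) := by
  rw [integral_mulVec_add_const_add_mulVec A c B hx hv, mulVec_sub, mulVec_sub]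
  abel

lemma integral_sub_integral_eq_zero {E : Type*} [NormedAddCommGroup E] [NormedSpace ℝ E]
    [CompleteSpace E] {f : Ω → E} (hf : Integrable f μ) : ∫ ω, (f ω - μ[f]) ∂μ = 0 := by
  rw [integral_sub hf (integrable_const _), integral_const, probReal_univ, one_smul, sub_self]

lemma integral_dotProduct_mulVec_self_eq_centered_add (M : Matrix ι ι ℝ) {f : Ω → ι → ℝ}
    (hf : MemLp f 2 μ) :
    ∫ ω, f ω ⬝ᵥ M *ᵥ f ω ∂μ
      = ∫ ω, (f ω - μ[f]) ⬝ᵥ M *ᵥ (f ω - μ[f]) ∂μ + μ[f] ⬝ᵥ M *ᵥ μ[f] := by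
  set c := μ[f]
  have hg : MemLp (fun ω => f ω - c) 2 μ := hf.sub (memLp_const c)
  have hpt : ∀ ω, f ω ⬝ᵥ M *ᵥ f ω = (f ω - c) ⬝ᵥ M *ᵥ (f ω - c)
      + ((f ω - c) ⬝ᵥ (M *ᵥ c + Mᵀ *ᵥ c) + c ⬝ᵥ M *ᵥ c) := by
    intro ω
    conv_lhs => rw [← sub_add_cancel (f ω) c]
    simp only [mulVec_add, dotProduct_add, add_dotProduct, mulVec_transpose,
      dotProduct_mulVec c M, dotProduct_comm (c ᵥ* M)]
    ring
  have hcross : Integrable (fun ω => (f ω - c) ⬝ᵥ (M *ᵥ c + Mᵀ *ᵥ c)) μ :=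
    hg.integrable_dotProduct (memLp_const _)
  simp only [hpt]
  rw [integral_add (hg.integrable_dotProduct (hg.mulVec M)) (hcross.fun_add (integrable_const _)),
    integral_add hcross (integrable_const _), integral_dotProduct_const (hg.integrable one_le_two),
    integral_sub_integral_eq_zero (hf.integrable one_le_two), zero_dotProduct, integral_const,
    probReal_univ, one_smul, zero_add]

lemma integral_dotProduct_mulVec_add_smul_of_indep {m : MeasurableSpace Ω} {w : Ω → ℝ}
    (hwindep : Indep (MeasurableSpace.comap w inferInstance) m μ)
    (M : Matrix ι ι ℝ) (hw : MemLp w 2 μ)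
    (hwmean : μ[w] = 0) (hwvar : ∫ ω, w ω ^ 2 ∂μ = 1) {p q : Ω → ι → ℝ}
    (hp : Measurable[m] p) (hp2 : MemLp p 2 μ) (hq : Measurable[m] q) (hq2 : MemLp q 2 μ) :
    ∫ ω, (p ω + w ω • q ω) ⬝ᵥ M *ᵥ (p ω + w ω • q ω) ∂μ
      = ∫ ω, p ω ⬝ᵥ M *ᵥ p ω ∂μ + ∫ ω, q ω ⬝ᵥ M *ᵥ q ω ∂μ := by
  set g₁ := fun ω => p ω ⬝ᵥ M *ᵥ q ω + q ω ⬝ᵥ M *ᵥ p ω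
  set g₂ := fun ω => q ω ⬝ᵥ M *ᵥ q ω
  have hg₁ : Integrable g₁ μ :=
    (hp2.integrable_dotProduct (hq2.mulVec M)).add (hq2.integrable_dotProduct (hp2.mulVec M))
  have hg₂ : Integrable g₂ μ := hq2.integrable_dotProduct (hq2.mulVec M)
  have hind₁ : IndepFun w g₁ μ := hwindep.indepFun_of_measurable (g := g₁) (by fun_prop)
  have hind₂ : IndepFun (fun ω => w ω ^ 2) g₂ μ :=
    (hwindep.indepFun_of_measurable (g := g₂) (by fun_prop)).comp
      (measurable_id.pow_const 2) measurable_id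
  have hwi := hw.integrable one_le_two
  have hwg₁ : Integrable (fun ω => w ω * g₁ ω) μ := hind₁.integrable_mul hwi hg₁
  have hwg₂ : Integrable (fun ω => w ω ^ 2 * g₂ ω) μ :=
    hind₂.integrable_mul hw.integrable_sq hg₂
  have hpt : ∀ ω, (p ω + w ω • q ω) ⬝ᵥ M *ᵥ (p ω + w ω • q ω)
      = p ω ⬝ᵥ M *ᵥ p ω + (w ω * g₁ ω + w ω ^ 2 * g₂ ω) := by
    intro ω
    simp only [g₁, g₂, mulVec_add, mulVec_smul, dotProduct_add, add_dotProduct, dotProduct_smul,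
      smul_dotProduct, smul_eq_mul]
    ring
  simp only [hpt]
  rw [integral_add (hp2.integrable_dotProduct (hp2.mulVec M)) (hwg₁.fun_add hwg₂),
    integral_add hwg₁ hwg₂,
    hind₁.integral_fun_mul_eq_mul_integral hwi.aestronglyMeasurable hg₁.aestronglyMeasurable,
    hind₂.integral_fun_mul_eq_mul_integral hw.integrable_sq.aestronglyMeasurable
      hg₂.aestronglyMeasurable, hwmean, hwvar, zero_mul, one_mul, zero_add]

end MeasureTheory

noncomputable section MeanField

variable {Ω ι κ ν : Type*} [Fintype ι] [Fintype κ] [Fintype ν] {m0 : MeasurableSpace Ω}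
  (μ : Measure Ω) (R : Matrix ι ι ℝ) (Q Qbar : Matrix κ κ ℝ) (A Abar : Matrix κ ν ℝ)
  (B : Matrix κ ι ℝ) (C Cbar : Matrix κ ν ℝ) (D : Matrix κ ι ℝ)

def decoupledCost (x : Ω → ν → ℝ) (v : Ω → ι → ℝ) : ℝ :=
  ∫ ω, lqCost R Q Q A B C D (x ω - μ[x]) (v ω - μ[v]) ∂μ
    + lqCost R (Q + Qbar) Q (A + Abar) B (C + Cbar) D μ[x] μ[v]

def IsStationaryControl (x : Ω → ν → ℝ) (u : Ω → ι → ℝ) : Prop :=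
  (∀ᵐ ω ∂μ, lqHessian R Q Q B D *ᵥ (u ω - μ[u]) = -(lqCross Q Q A B C D *ᵥ (x ω - μ[x]))) ∧
    lqHessian R (Q + Qbar) Q B D *ᵥ μ[u]
      = -(lqCross (Q + Qbar) Q (A + Abar) B (C + Cbar) D *ᵥ μ[x])

variable {μ R Q Qbar A Abar B C Cbar D}

lemma MeasureTheory.MemLp.integrable_lqCost {Q₁ Q₂ : Matrix κ κ ℝ} {a : Ω → ν → ℝ}
    {b : Ω → ι → ℝ} (ha : MemLp a 2 μ) (hb : MemLp b 2 μ) :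
    Integrable (fun ω => lqCost R Q₁ Q₂ A B C D (a ω) (b ω)) μ := by
  have hAB : MemLp (fun ω => A *ᵥ a ω + B *ᵥ b ω) 2 μ := (ha.mulVec A).add (hb.mulVec B)
  have hCD : MemLp (fun ω => C *ᵥ a ω + D *ᵥ b ω) 2 μ := (ha.mulVec C).add (hb.mulVec D)
  exact ((hb.integrable_dotProduct (hb.mulVec R)).add
    (hAB.integrable_dotProduct (hAB.mulVec Q₁))).add (hCD.integrable_dotProduct (hCD.mulVec Q₂))

lemma integral_lqCost {Q₁ Q₂ : Matrix κ κ ℝ} {a : Ω → ν → ℝ} {b : Ω → ι → ℝ}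
    (ha : MemLp a 2 μ) (hb : MemLp b 2 μ) :
    ∫ ω, lqCost R Q₁ Q₂ A B C D (a ω) (b ω) ∂μ
      = ∫ ω, b ω ⬝ᵥ R *ᵥ b ω ∂μ
        + ∫ ω, (A *ᵥ a ω + B *ᵥ b ω) ⬝ᵥ Q₁ *ᵥ (A *ᵥ a ω + B *ᵥ b ω) ∂μ
        + ∫ ω, (C *ᵥ a ω + D *ᵥ b ω) ⬝ᵥ Q₂ *ᵥ (C *ᵥ a ω + D *ᵥ b ω) ∂μ := by
  have hAB : MemLp (fun ω => A *ᵥ a ω + B *ᵥ b ω) 2 μ := (ha.mulVec A).add (hb.mulVec B)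
  have hCD : MemLp (fun ω => C *ᵥ a ω + D *ᵥ b ω) 2 μ := (ha.mulVec C).add (hb.mulVec D)
  rw [← integral_add (hb.integrable_dotProduct (hb.mulVec R))
      (hAB.integrable_dotProduct (hAB.mulVec Q₁)),
    ← integral_add ((hb.integrable_dotProduct (hb.mulVec R)).fun_add
      (hAB.integrable_dotProduct (hAB.mulVec Q₁))) (hCD.integrable_dotProduct (hCD.mulVec Q₂))]
  rfl

variable [IsProbabilityMeasure μ] {m : MeasurableSpace Ω}

theorem cost_eq_decoupledCost {w : Ω → ℝ} (hw : MemLp w 2 μ)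
    (hwindep : Indep (MeasurableSpace.comap w inferInstance) m μ)
    (hwmean : μ[w] = 0) (hwvar : ∫ ω, w ω ^ 2 ∂μ = 1)
    {x : Ω → ν → ℝ} (hx : Measurable[m] x) (hx2 : MemLp x 2 μ)
    {v : Ω → ι → ℝ} (hv : Measurable[m] v) (hv2 : MemLp v 2 μ) {xp : Ω → κ → ℝ}
    (hxp : ∀ ω, xp ω = A *ᵥ x ω + Abar *ᵥ μ[x] + B *ᵥ v ω
      + w ω • (C *ᵥ x ω + Cbar *ᵥ μ[x] + D *ᵥ v ω)) :
    (∫ ω, v ω ⬝ᵥ R *ᵥ v ω ∂μ) + (∫ ω, xp ω ⬝ᵥ Q *ᵥ xp ω ∂μ) + μ[xp] ⬝ᵥ Qbar *ᵥ μ[xp]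
      = decoupledCost μ R Q Qbar A Abar B C Cbar D x v := by
  set p := fun ω => A *ᵥ x ω + Abar *ᵥ μ[x] + B *ᵥ v ω
  set q := fun ω => C *ᵥ x ω + Cbar *ᵥ μ[x] + D *ᵥ v ω
  have hq : Measurable[m] q := by fun_prop
  have hp2 : MemLp p 2 μ := ((hx2.mulVec A).add (memLp_const _)).add (hv2.mulVec B)
  have hq2 : MemLp q 2 μ := ((hx2.mulVec C).add (memLp_const _)).add (hv2.mulVec D)
  have hxI := hx2.integrable one_le_two
  have hvI := hv2.integrable one_le_two
  have hp_mean : μ[p] = (A + Abar) *ᵥ μ[x] + B *ᵥ μ[v] := by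
    rw [integral_mulVec_add_const_add_mulVec _ _ _ hxI hvI, add_mulVec]
  have hq_mean : μ[q] = (C + Cbar) *ᵥ μ[x] + D *ᵥ μ[v] := by
    rw [integral_mulVec_add_const_add_mulVec _ _ _ hxI hvI, add_mulVec]
  have hp_cent : ∀ ω, p ω - μ[p] = A *ᵥ (x ω - μ[x]) + B *ᵥ (v ω - μ[v]) :=
    sub_integral_mulVec_add_const_add_mulVec A _ B hxI hvI
  have hq_cent : ∀ ω, q ω - μ[q] = C *ᵥ (x ω - μ[x]) + D *ᵥ (v ω - μ[v]) :=
    sub_integral_mulVec_add_const_add_mulVec C _ D hxI hvI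
  have hx2' : MemLp (fun ω => x ω - μ[x]) 2 μ := hx2.sub (memLp_const _)
  have hv2' : MemLp (fun ω => v ω - μ[v]) 2 μ := hv2.sub (memLp_const _)
  rw [show xp = fun ω => p ω + w ω • q ω from funext hxp,
    integral_add_smul_of_indep hwindep (hw.integrable one_le_two) hwmean
      (hp2.integrable one_le_two) hq (hq2.integrable one_le_two),
    integral_dotProduct_mulVec_add_smul_of_indep hwindep Q hw hwmean hwvar (by fun_prop) hp2 hq
      hq2,
    integral_dotProduct_mulVec_self_eq_centered_add R hv2,
    integral_dotProduct_mulVec_self_eq_centered_add Q hp2,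
    integral_dotProduct_mulVec_self_eq_centered_add Q hq2, decoupledCost, integral_lqCost hx2' hv2']
  simp only [hp_cent, hq_cent]
  simp only [hp_mean, hq_mean, lqCost, add_mulVec, dotProduct_add]
  ring

theorem decoupledCost_sub_of_isStationaryControl (hR : R.IsSymm) (hQ : Q.IsSymm)
    (hQQbar : (Q + Qbar).IsSymm) {x : Ω → ν → ℝ} {u v : Ω → ι → ℝ} (hx2 : MemLp x 2 μ)
    (hu2 : MemLp u 2 μ) (hv2 : MemLp v 2 μ)
    (hu : IsStationaryControl μ R Q Qbar A Abar B C Cbar D x u) :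
    decoupledCost μ R Q Qbar A Abar B C Cbar D x v - decoupledCost μ R Q Qbar A Abar B C Cbar D x u
      = ∫ ω, (v ω - μ[v] - (u ω - μ[u])) ⬝ᵥ lqHessian R Q Q B D *ᵥ (v ω - μ[v] - (u ω - μ[u])) ∂μ
        + (μ[v] - μ[u]) ⬝ᵥ lqHessian R (Q + Qbar) Q B D *ᵥ (μ[v] - μ[u]) := by
  have hx2' : MemLp (fun ω => x ω - μ[x]) 2 μ := hx2.sub (memLp_const _)
  have hu2' : MemLp (fun ω => u ω - μ[u]) 2 μ := hu2.sub (memLp_const _)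
  have hv2' : MemLp (fun ω => v ω - μ[v]) 2 μ := hv2.sub (memLp_const _)
  have hfluct : ∫ ω, lqCost R Q Q A B C D (x ω - μ[x]) (v ω - μ[v]) ∂μ
      - ∫ ω, lqCost R Q Q A B C D (x ω - μ[x]) (u ω - μ[u]) ∂μ
      = ∫ ω, (v ω - μ[v] - (u ω - μ[u])) ⬝ᵥ lqHessian R Q Q B D *ᵥ (v ω - μ[v] - (u ω - μ[u])) ∂μ
      := by
    rw [← integral_sub (hx2'.integrable_lqCost hv2') (hx2'.integrable_lqCost hu2')]
    exact integral_congr_ae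
      (hu.1.mono fun ω h => lqCost_sub_lqCost_of_stationary A B C D hR hQ hQ h _)
  rw [decoupledCost, decoupledCost, ← hfluct, ← lqCost_sub_lqCost_of_stationary (A + Abar) B
    (C + Cbar) D hR hQQbar hQ hu.2]
  ring

theorem decoupledCost_le_of_isStationaryControl (hR : R.PosDef) (hQ : Q.PosSemidef)
    (hQQbar : (Q + Qbar).PosSemidef) {x : Ω → ν → ℝ} {u v : Ω → ι → ℝ} (hx2 : MemLp x 2 μ)
    (hu2 : MemLp u 2 μ) (hv2 : MemLp v 2 μ)
    (hu : IsStationaryControl μ R Q Qbar A Abar B C Cbar D x u) :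
    decoupledCost μ R Q Qbar A Abar B C Cbar D x u
      ≤ decoupledCost μ R Q Qbar A Abar B C Cbar D x v := by
  have hdiff := decoupledCost_sub_of_isStationaryControl (isHermitian_iff_isSymm.1 hR.isHermitian)
    (isHermitian_iff_isSymm.1 hQ.isHermitian) (isHermitian_iff_isSymm.1 hQQbar.isHermitian)
    hx2 hu2 hv2 hu
  rw [← sub_nonneg, hdiff]
  exact add_nonneg (integral_nonneg fun ω =>
      (lqHessian_posDef hR hQ hQ B D).posSemidef.dotProduct_mulVec_self_nonneg _)
    ((lqHessian_posDef hR hQQbar hQ B D).posSemidef.dotProduct_mulVec_self_nonneg _)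

theorem isStationaryControl_of_decoupledCost_le (hR : R.PosDef) (hQ : Q.PosSemidef)
    (hQQbar : (Q + Qbar).PosSemidef) {x : Ω → ν → ℝ} {u₀ v : Ω → ι → ℝ} (hx2 : MemLp x 2 μ)
    (hu₀2 : MemLp u₀ 2 μ) (hv2 : MemLp v 2 μ)
    (hu₀ : IsStationaryControl μ R Q Qbar A Abar B C Cbar D x u₀)
    (hle : decoupledCost μ R Q Qbar A Abar B C Cbar D x v
      ≤ decoupledCost μ R Q Qbar A Abar B C Cbar D x u₀) :
    IsStationaryControl μ R Q Qbar A Abar B C Cbar D x v := by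
  set δ := fun ω => v ω - μ[v] - (u₀ ω - μ[u₀])
  have hS := lqHessian_posDef hR hQ hQ B D
  have hSbar := lqHessian_posDef hR hQQbar hQ B D
  have hdiff := decoupledCost_sub_of_isStationaryControl (isHermitian_iff_isSymm.1 hR.isHermitian)
    (isHermitian_iff_isSymm.1 hQ.isHermitian) (isHermitian_iff_isSymm.1 hQQbar.isHermitian)
    hx2 hu₀2 hv2 hu₀
  have hfluct_nonneg : 0 ≤ᵐ[μ] fun ω => δ ω ⬝ᵥ lqHessian R Q Q B D *ᵥ δ ω :=
    ae_of_all _ fun ω => hS.posSemidef.dotProduct_mulVec_self_nonneg (δ ω)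
  have hmean_nonneg := hSbar.posSemidef.dotProduct_mulVec_self_nonneg (μ[v] - μ[u₀])
  have hfluct_zero : ∫ ω, δ ω ⬝ᵥ lqHessian R Q Q B D *ᵥ δ ω ∂μ = 0 :=
    le_antisymm (by linarith [integral_nonneg_of_ae hfluct_nonneg])
      (integral_nonneg_of_ae hfluct_nonneg)
  have hmean : μ[v] = μ[u₀] :=
    sub_eq_zero.1 (hSbar.eq_zero_of_dotProduct_mulVec_self_eq_zero (by linarith))
  have hδ2 : MemLp δ 2 μ := (hv2.sub (memLp_const _)).sub (hu₀2.sub (memLp_const _))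
  have hfluct : ∀ᵐ ω ∂μ, v ω - μ[v] = u₀ ω - μ[u₀] := by
    filter_upwards [(integral_eq_zero_iff_of_nonneg_ae hfluct_nonneg
      (hδ2.integrable_dotProduct (hδ2.mulVec _))).1 hfluct_zero] with ω hω
    exact sub_eq_zero.1 (hS.eq_zero_of_dotProduct_mulVec_self_eq_zero hω)
  refine ⟨?_, ?_⟩
  · filter_upwards [hfluct, hu₀.1] with ω h h₀
    rw [h, h₀]
  · rw [hmean]
    exact hu₀.2

theorem exists_isStationaryControl [DecidableEq ι] (hR : R.PosDef) (hQ : Q.PosSemidef)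
    (hQQbar : (Q + Qbar).PosSemidef) {x : Ω → ν → ℝ} (hx : Measurable[m] x) (hx2 : MemLp x 2 μ) :
    ∃ u, Measurable[m] u ∧ MemLp u 2 μ ∧ IsStationaryControl μ R Q Qbar A Abar B C Cbar D x u := by
  set F := -((lqHessian R Q Q B D)⁻¹ * lqCross Q Q A B C D)
  set Fbar := -((lqHessian R (Q + Qbar) Q B D)⁻¹ * lqCross (Q + Qbar) Q (A + Abar) B (C + Cbar) D)
  set c := Fbar *ᵥ μ[x] - F *ᵥ μ[x]
  set u₀ := fun ω => F *ᵥ x ω + c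
  have hmean : μ[u₀] = Fbar *ᵥ μ[x] := by
    rw [integral_add ((hx2.integrable one_le_two).mulVec F) (integrable_const c),
      integral_mulVec F (hx2.integrable one_le_two), integral_const, probReal_univ, one_smul]
    simp only [c]
    abel
  refine ⟨u₀, by fun_prop, (hx2.mulVec F).add (memLp_const c), ae_of_all _ fun ω => ?_, ?_⟩
  · rw [hmean, show u₀ ω - Fbar *ᵥ μ[x] = F *ᵥ (x ω - μ[x]) by simp only [u₀, c, mulVec_sub]; abel]
    exact mulVec_neg_nonsing_inv_mul_mulVec (lqHessian_posDef hR hQ hQ B D).isUnit _ _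
  · rw [hmean]
    exact mulVec_neg_nonsing_inv_mul_mulVec (lqHessian_posDef hR hQQbar hQ B D).isUnit _ _

theorem forall_decoupledCost_le_iff [DecidableEq ι] (hR : R.PosDef) (hQ : Q.PosSemidef)
    (hQQbar : (Q + Qbar).PosSemidef) {x : Ω → ν → ℝ} {u : Ω → ι → ℝ} (hx : Measurable[m] x)
    (hx2 : MemLp x 2 μ) (hu2 : MemLp u 2 μ) :
    (∀ v, Measurable[m] v → MemLp v 2 μ →
        decoupledCost μ R Q Qbar A Abar B C Cbar D x u
          ≤ decoupledCost μ R Q Qbar A Abar B C Cbar D x v)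
      ↔ IsStationaryControl μ R Q Qbar A Abar B C Cbar D x u := by
  obtain ⟨u₀, hu₀, hu₀2, hu₀st⟩ := exists_isStationaryControl hR hQ hQQbar hx hx2
  exact ⟨fun hmin => isStationaryControl_of_decoupledCost_le hR hQ hQQbar hx2 hu₀2 hu2 hu₀st
      (hmin u₀ hu₀ hu₀2),
    fun hu v _ hv2 => decoupledCost_le_of_isStationaryControl hR hQ hQQbar hx2 hu2 hv2 hu⟩

end MeanField

theorem stmt_19_general {Ω : Type*} [m0 : MeasurableSpace Ω] (μ : Measure Ω) [IsProbabilityMeasure μ]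
    {n r : ℕ} (m : MeasurableSpace Ω)
    (A Abar C Cbar Q Qbar : Matrix (Fin n) (Fin n) ℝ)
    (B D : Matrix (Fin n) (Fin r) ℝ) (R : Matrix (Fin r) (Fin r) ℝ)
    (hQ : Q.PosSemidef) (hQQbar : (Q + Qbar).PosSemidef) (hR : R.PosDef)
    (w : Ω → ℝ) (hw2 : MemLp w 2 μ)
    (hwindep : Indep (MeasurableSpace.comap w inferInstance) m μ)
    (hwmean : ∫ ω, w ω ∂μ = 0) (hwvar : ∫ ω, (w ω) ^ 2 ∂μ = 1)
    (x : Ω → Fin n → ℝ) (hxmeas : Measurable[m] x) (hx2 : MemLp x 2 μ)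
    -- admissible controls: `m`-measurable and square integrable
    (Adm : (Ω → Fin r → ℝ) → Prop)
    (hAdm : ∀ v, Adm v ↔ (Measurable[m] v ∧ MemLp v 2 μ))
    -- the next state generated by a control
    (xplus : (Ω → Fin r → ℝ) → Ω → Fin n → ℝ)
    (hxplus : ∀ v ω, xplus v ω = A.mulVec (x ω) + Abar.mulVec (∫ ω', x ω' ∂μ)
        + B.mulVec (v ω)
        + w ω • (C.mulVec (x ω) + Cbar.mulVec (∫ ω', x ω' ∂μ) + D.mulVec (v ω)))
    -- the one-step cost
    (cost : (Ω → Fin r → ℝ) → ℝ)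
    (hcost : ∀ v, cost v = (∫ ω, v ω ⬝ᵥ R.mulVec (v ω) ∂μ)
        + (∫ ω, xplus v ω ⬝ᵥ Q.mulVec (xplus v ω) ∂μ)
        + (∫ ω, xplus v ω ∂μ) ⬝ᵥ Qbar.mulVec (∫ ω, xplus v ω ∂μ))
    (u : Ω → Fin r → ℝ) (hu : Adm u) :
    (∀ v, Adm v → cost u ≤ cost v) ↔
      ((∀ᵐ ω ∂μ,
          (R + Bᵀ * Q * B + Dᵀ * Q * D).mulVec (u ω - ∫ ω', u ω' ∂μ)
            = -((Bᵀ * Q * A + Dᵀ * Q * C).mulVec (x ω - ∫ ω', x ω' ∂μ))) ∧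
       (R + Bᵀ * (Q + Qbar) * B + Dᵀ * Q * D).mulVec (∫ ω', u ω' ∂μ)
          = -((Bᵀ * (Q + Qbar) * (A + Abar) + Dᵀ * Q * (C + Cbar)).mulVec
              (∫ ω', x ω' ∂μ))) := by
  have hcost_eq : ∀ v, Adm v → cost v = decoupledCost μ R Q Qbar A Abar B C Cbar D x v := by
    intro v hv
    obtain ⟨hvm, hv2⟩ := (hAdm v).1 hv
    rw [hcost, cost_eq_decoupledCost hw2 hwindep hwmean hwvar hxmeas hx2 hvm hv2 (hxplus v)]
  obtain ⟨-, hu2⟩ := (hAdm u).1 hu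
  refine (forall_congr' fun v => ?_).trans
    (forall_decoupledCost_le_iff hR hQ hQQbar hxmeas hx2 hu2)
  rw [hAdm, and_imp]
  refine imp_congr_right fun hvm => imp_congr_right fun hv2 => ?_
  rw [hcost_eq u hu, hcost_eq v ((hAdm v).2 ⟨hvm, hv2⟩)]

/-- One-step mean-field LQ problem: the unique optimal terminal-stage control
is characterized by the decoupled pair of equations for its fluctuation and mean parts. -/
theorem stmt_19 {Ω : Type*} [m0 : MeasurableSpace Ω] (μ : Measure Ω) [IsProbabilityMeasure μ]
    {n r : ℕ} (m : MeasurableSpace Ω) (hm : m ≤ m0)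
    (A Abar C Cbar Q Qbar : Matrix (Fin n) (Fin n) ℝ)
    (B D : Matrix (Fin n) (Fin r) ℝ) (R : Matrix (Fin r) (Fin r) ℝ)
    (hQ : Q.PosSemidef) (hQQbar : (Q + Qbar).PosSemidef) (hR : R.PosDef)
    (w : Ω → ℝ) (hw2 : MemLp w 2 μ)
    (hwindep : Indep (MeasurableSpace.comap w inferInstance) m μ)
    (hwmean : ∫ ω, w ω ∂μ = 0) (hwvar : ∫ ω, (w ω) ^ 2 ∂μ = 1)
    (x : Ω → Fin n → ℝ) (hxmeas : Measurable[m] x) (hx2 : MemLp x 2 μ)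
    -- admissible controls: `m`-measurable and square integrable
    (Adm : (Ω → Fin r → ℝ) → Prop)
    (hAdm : ∀ v, Adm v ↔ (Measurable[m] v ∧ MemLp v 2 μ))
    -- the next state generated by a control
    (xplus : (Ω → Fin r → ℝ) → Ω → Fin n → ℝ)
    (hxplus : ∀ v ω, xplus v ω = A.mulVec (x ω) + Abar.mulVec (∫ ω', x ω' ∂μ)
        + B.mulVec (v ω)
        + w ω • (C.mulVec (x ω) + Cbar.mulVec (∫ ω', x ω' ∂μ) + D.mulVec (v ω)))
    -- the one-step cost
    (cost : (Ω → Fin r → ℝ) → ℝ)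
    (hcost : ∀ v, cost v = (∫ ω, v ω ⬝ᵥ R.mulVec (v ω) ∂μ)
        + (∫ ω, xplus v ω ⬝ᵥ Q.mulVec (xplus v ω) ∂μ)
        + (∫ ω, xplus v ω ∂μ) ⬝ᵥ Qbar.mulVec (∫ ω, xplus v ω ∂μ))
    (u : Ω → Fin r → ℝ) (hu : Adm u) :
    (∀ v, Adm v → cost u ≤ cost v) ↔
      ((∀ᵐ ω ∂μ,
          (R + Bᵀ * Q * B + Dᵀ * Q * D).mulVec (u ω - ∫ ω', u ω' ∂μ)
            = -((Bᵀ * Q * A + Dᵀ * Q * C).mulVec (x ω - ∫ ω', x ω' ∂μ))) ∧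
       (R + Bᵀ * (Q + Qbar) * B + Dᵀ * Q * D).mulVec (∫ ω', u ω' ∂μ)
          = -((Bᵀ * (Q + Qbar) * (A + Abar) + Dᵀ * Q * (C + Cbar)).mulVec
              (∫ ω', x ω' ∂μ))) :=
  stmt_19_general (m0 := m0) μ m A Abar C Cbar Q Qbar B D R hQ hQQbar hR w hw2 hwindep hwmean hwvar
    x hxmeas hx2 Adm hAdm xplus hxplus cost hcost u hu
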